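/- arXiv:1405.5452 — 4 statements merged into one kernel-verified Lean document; each statement's English description precedes it below -/
import Mathlib

section
/- If I is a weakly polymatroidal monomial ideal in S = K[x_1,...,x_n], then I has linear quotients with respect to the pure lexicographic order on its minimal monomial generators induced by x_1 > x_2 > ... > x_n. -/
/-! If `x^a ≻_lex x^b` are minimal generators first differing at `t` (so `b_t < a_t`), the
exchange property gives a generator dividing `x_t x^b / x_k` for some `k > t`; a lex-maximal
generator dividing `x_t x^b / x_k` is then lex-larger than `x^b`, since otherwise
the same statement for a smaller index produces a larger one. So each earlier generator `x^a`
yields a variable `x_t` with `x_t x^b` in the earlier ideal and `x_t ∣ x^a / gcd(x^a, x^b)`,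
and this makes every colon ideal generated by variables. -/

open MvPolynomial

namespace Paper

variable (K : Type) [Field K]

/-- The monomial `x^a` in `K[x_0, …, x_{n-1}]`. -/
noncomputable def mono (n : ℕ) (a : Fin n → ℕ) : MvPolynomial (Fin n) K :=
  MvPolynomial.monomial (Finsupp.equivFunOnFinite.symm a) 1

/-- A monomial ideal: an ideal generated by the monomials it contains. -/
def IsMonomialIdeal (n : ℕ) (I : Ideal (MvPolynomial (Fin n) K)) : Prop :=
  I = Ideal.span ((mono K n) '' {a | mono K n a ∈ I})

/-- The set of exponent vectors of the minimal monomial generators `G(I)`. -/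
def minGen (n : ℕ) (I : Ideal (MvPolynomial (Fin n) K)) : Set (Fin n → ℕ) :=
  {a | mono K n a ∈ I ∧ ∀ i : Fin n, 0 < a i → mono K n (a - Pi.single i 1) ∉ I}

/-- The monomial ideal generated by a set of exponent vectors. -/
noncomputable def monomialIdealOf (n : ℕ) (A : Set (Fin n → ℕ)) :
    Ideal (MvPolynomial (Fin n) K) :=
  Ideal.span ((mono K n) '' A)

/-- Weakly polymatroidal monomial ideal. -/
def WeaklyPolymatroidal (n : ℕ) (I : Ideal (MvPolynomial (Fin n) K)) : Prop :=
  IsMonomialIdeal K n I ∧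
    ∀ a b : Fin n → ℕ, a ∈ minGen K n I → b ∈ minGen K n I →
      ∀ t : Fin n, (∀ s : Fin n, s < t → a s = b s) → b t < a t →
        ∃ j : Fin n, t < j ∧ 0 < b j ∧
          mono K n (b + Pi.single t 1 - Pi.single j 1) ∈ I

/-- Polymatroidal monomial ideal. -/
def Polymatroidal (n : ℕ) (I : Ideal (MvPolynomial (Fin n) K)) : Prop :=
  IsMonomialIdeal K n I ∧
    (∃ d : ℕ, ∀ a ∈ minGen K n I, ∑ i, a i = d) ∧
    ∀ a b : Fin n → ℕ, a ∈ minGen K n I → b ∈ minGen K n I →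
      ∀ i : Fin n, b i < a i →
        ∃ j : Fin n, a j < b j ∧
          (a + Pi.single j 1 - Pi.single i 1) ∈ minGen K n I

/-- `I` has linear quotients with respect to the order `u 0 ≺ u 1 ≺ …` on its
minimal monomial generators: each colon ideal `(u 0, …, u (i-1)) : u i` is
generated by a subset of the variables. -/
def LinearQuotientsWith (n : ℕ) (I : Ideal (MvPolynomial (Fin n) K)) (t : ℕ)
    (u : Fin t → (Fin n → ℕ)) : Prop :=
  Function.Injective u ∧ Set.range u = minGen K n I ∧
    ∀ i : Fin t, 0 < (i : ℕ) →
      ∃ V : Set (Fin n),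
        Submodule.colon (monomialIdealOf K n (u '' {j | (j : ℕ) < (i : ℕ)}))
            (Ideal.span {mono K n (u i)}) =
          Ideal.span ((fun k => (X k : MvPolynomial (Fin n) K)) '' V)

/-- `pd_R M ≤ d`, defined recursively via kernels of surjections from projectives. -/
def HasProjDimLE (R : Type) [CommRing R] :
    ℕ → ∀ (M : Type) [AddCommGroup M] [Module R M], Prop
  | 0, M, _, _ => Module.Projective R M
  | (d + 1), M, _, _ =>
      ∃ (P : Type) (_ : AddCommGroup P) (_ : Module R P) (f : P →ₗ[R] M),
        Module.Projective R P ∧ Function.Surjective f ∧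
          HasProjDimLE R d (LinearMap.ker f)

/-- The projective dimension of `M` over `R`, as an element of `ℕ∞`. -/
noncomputable def projDim (R : Type) [CommRing R] (M : Type) [AddCommGroup M]
    [Module R M] : ℕ∞ :=
  sInf ((↑) '' {d : ℕ | HasProjDimLE R d M})

/-- The depth of `M` with respect to the ideal `J`: the supremum of the lengths of
`M`-regular sequences consisting of elements of `J`. -/
noncomputable def depth (R : Type) [CommRing R] (J : Ideal R) (M : Type)
    [AddCommGroup M] [Module R M] : ℕ∞ :=
  sSup ((↑) '' {k : ℕ | ∃ rs : List R, rs.length = k ∧ (∀ r ∈ rs, r ∈ J) ∧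
    RingTheory.Sequence.IsRegular M rs})

/-- The graded maximal ideal `(x_0, …, x_{n-1})` of `K[x_0, …, x_{n-1}]`. -/
noncomputable def maxIdeal (n : ℕ) : Ideal (MvPolynomial (Fin n) K) :=
  Ideal.span (Set.range X)

/-- The Stanley space `x^a · K[Z]`, as a `K`-subspace of `K[x_0, …, x_{n-1}]`. -/
noncomputable def stanleySpace (n : ℕ) (a : Fin n → ℕ) (Z : Finset (Fin n)) :
    Submodule K (MvPolynomial (Fin n) K) :=
  Submodule.span K ((fun e => mono K n (a + e)) '' {e | ∀ j, j ∉ Z → e j = 0})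

/-- A Stanley decomposition of `S/I`: a `K`-vector space decomposition
`S = I ⊕ (⊕ᵢ x^{a i} K[Z i])`. -/
def IsStanleyDecOfQuot (n : ℕ) (I : Ideal (MvPolynomial (Fin n) K)) (t : ℕ)
    (a : Fin t → (Fin n → ℕ)) (Z : Fin t → Finset (Fin n)) : Prop :=
  iSupIndep (fun o : Option (Fin t) =>
      o.elim (Submodule.restrictScalars K I) (fun i => stanleySpace K n (a i) (Z i))) ∧
    (⨆ o : Option (Fin t),
      o.elim (Submodule.restrictScalars K I) (fun i => stanleySpace K n (a i) (Z i))) = ⊤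

/-- The Stanley depth of `S/I`. -/
noncomputable def sdepthQuot (n : ℕ) (I : Ideal (MvPolynomial (Fin n) K)) : ℕ∞ :=
  sSup ((↑) '' {d : ℕ | ∃ (t : ℕ) (a : Fin t → (Fin n → ℕ)) (Z : Fin t → Finset (Fin n)),
    IsStanleyDecOfQuot K n I t a Z ∧ ∀ i, d ≤ (Z i).card})

/-- A Stanley decomposition of the ideal `I` itself: `I = ⊕ᵢ x^{a i} K[Z i]`
as `K`-vector spaces. -/
def IsStanleyDecOfIdeal (n : ℕ) (I : Ideal (MvPolynomial (Fin n) K)) (t : ℕ)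
    (a : Fin t → (Fin n → ℕ)) (Z : Fin t → Finset (Fin n)) : Prop :=
  iSupIndep (fun i : Fin t => stanleySpace K n (a i) (Z i)) ∧
    (⨆ i : Fin t, stanleySpace K n (a i) (Z i)) = Submodule.restrictScalars K I

/-- The Stanley depth of the ideal `I`. -/
noncomputable def sdepthIdeal (n : ℕ) (I : Ideal (MvPolynomial (Fin n) K)) : ℕ∞ :=
  sSup ((↑) '' {d : ℕ | ∃ (t : ℕ) (a : Fin t → (Fin n → ℕ)) (Z : Fin t → Finset (Fin n)),
    IsStanleyDecOfIdeal K n I t a Z ∧ ∀ i, d ≤ (Z i).card})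

end Paper

namespace Paper

variable {K : Type} [Field K] {n : ℕ}

theorem mono_mul_mono (a b : Fin n → ℕ) : mono K n a * mono K n b = mono K n (a + b) := by
  rw [mono, mono, mono, monomial_mul, one_mul]
  congr 2
  ext
  simp

theorem X_mul_mono (k : Fin n) (b : Fin n → ℕ) :
    X k * mono K n b = mono K n (b + Pi.single k 1) := by
  rw [X, ← Finsupp.equivFunOnFinite_symm_single, ← mono, mono_mul_mono, add_comm]

theorem mono_mem_of_le {J : Ideal (MvPolynomial (Fin n) K)} {a c : Fin n → ℕ}
    (ha : mono K n a ∈ J) (hac : a ≤ c) : mono K n c ∈ J := by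
  have hc : mono K n (c - a) * mono K n a = mono K n c := by
    rw [mono_mul_mono, tsub_add_cancel_of_le hac]
  exact hc ▸ J.mul_mem_left _ ha

theorem mem_monomialIdealOf_iff {A : Set (Fin n → ℕ)} {p : MvPolynomial (Fin n) K} :
    p ∈ monomialIdealOf K n A ↔ ∀ m ∈ p.support, ∃ a ∈ A, ∀ r, a r ≤ m r := by
  have hA : mono K n '' A = (monomial · (1 : K)) '' (Finsupp.equivFunOnFinite.symm '' A) := by
    rw [Set.image_image]
    rfl
  rw [monomialIdealOf, hA, mem_ideal_span_monomial_image]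
  simp only [Set.exists_mem_image, Finsupp.le_def, Finsupp.coe_equivFunOnFinite_symm]

theorem exists_minGen_le {I : Ideal (MvPolynomial (Fin n) K)} (c : Fin n → ℕ)
    (hc : mono K n c ∈ I) : ∃ g ∈ minGen K n I, g ≤ c := by
  by_cases hmin : ∀ i, 0 < c i → mono K n (c - Pi.single i 1) ∉ I
  · exact ⟨c, ⟨hc, hmin⟩, le_rfl⟩
  · push Not at hmin
    obtain ⟨i, hi, hmem⟩ := hmin
    obtain ⟨g, hg, hle⟩ := exists_minGen_le (c - Pi.single i 1) hmem
    exact ⟨g, hg, hle.trans tsub_le_self⟩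
termination_by ∑ r, c r
decreasing_by
  refine Finset.sum_lt_sum (fun r _ => Nat.sub_le _ _) ⟨i, Finset.mem_univ i, ?_⟩
  simp only [Pi.sub_apply, Pi.single_eq_same]
  omega

theorem eq_of_le_of_mem_minGen {I : Ideal (MvPolynomial (Fin n) K)} {g g' : Fin n → ℕ}
    (hg : g ∈ minGen K n I) (hg' : g' ∈ minGen K n I) (hle : g ≤ g') : g = g' := by
  by_contra hne
  obtain ⟨i, hi⟩ : ∃ i, g i < g' i := by
    by_contra! h
    exact hne (le_antisymm hle h)
  refine hg'.2 i (Nat.zero_lt_of_lt hi) (mono_mem_of_le hg.1 fun r => ?_)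
  rcases eq_or_ne r i with rfl | hri
  · simp only [Pi.sub_apply, Pi.single_eq_same]
    omega
  · simpa only [Pi.sub_apply, Pi.single_eq_of_ne hri, tsub_zero] using hle r

theorem colon_monomialIdealOf_eq_span_X {A : Set (Fin n → ℕ)} {b : Fin n → ℕ}
    (hA : ∀ a ∈ A, ∃ s, b s < a s ∧ mono K n (b + Pi.single s 1) ∈ monomialIdealOf K n A) :
    (monomialIdealOf K n A).colon (Ideal.span {mono K n b}) =
      Ideal.span (X '' {k | mono K n (b + Pi.single k 1) ∈ monomialIdealOf K n A}) := by
  apply le_antisymm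
  · intro f hf
    rw [Ideal.mem_colon_span_singleton] at hf
    rw [mem_ideal_span_X_image]
    intro m hm
    have hmb : m + Finsupp.equivFunOnFinite.symm b ∈ (f * mono K n b).support := by
      rw [mem_support_iff, mono, coeff_mul_monomial, mul_one]
      exact mem_support_iff.mp hm
    obtain ⟨a, ha, hle⟩ := mem_monomialIdealOf_iff.mp hf _ hmb
    obtain ⟨s, hs, hsA⟩ := hA a ha
    have hle_s : a s ≤ m s + b s := hle s
    exact ⟨s, hsA, by omega⟩
  · rw [Ideal.span_le]
    rintro _ ⟨k, hk, rfl⟩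
    rw [SetLike.mem_coe, Ideal.mem_colon_span_singleton, X_mul_mono]
    exact hk

theorem le_of_le_add_single_of_lexLT {w b : Fin n → ℕ} {s t : Fin n}
    (hwb : w ≤ b + Pi.single t 1) (hws : ∀ r < s, w r = b r) (hs : w s < b s) (hts : t ≤ s) :
    w ≤ b := by
  intro r
  rcases lt_trichotomy r s with hr | rfl | hr
  · exact (hws r hr).le
  · exact hs.le
  · simpa [Pi.single_eq_of_ne (hts.trans_lt hr).ne'] using hwb r

theorem WeaklyPolymatroidal.exists_minGen_le_add_single_lexGT {I : Ideal (MvPolynomial (Fin n) K)}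
    (hI : WeaklyPolymatroidal K n I) {t : Fin n} {a b : Fin n → ℕ}
    (ha : a ∈ minGen K n I) (hb : b ∈ minGen K n I) (hab : ∀ s < t, a s = b s)
    (hbt : b t < a t) :
    ∃ h ∈ minGen K n I, h ≤ b + Pi.single t 1 ∧ toLex b < toLex h := by
  induction t using WellFoundedLT.induction generalizing b with
  | ind t IH =>
  obtain ⟨k, htk, hbk, hk⟩ := hI.2 a b ha hb t hab hbt
  obtain ⟨w₀, hw₀, hw₀k⟩ := exists_minGen_le _ hk
  have hkt : k ≠ t := htk.ne'
  -- A lex-maximal generator dividing `x_t x^b / x_k` is lex-larger than `x^b`: otherwise the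
  -- induction hypothesis produces a lex-larger one of the same kind.
  let W := {g ∈ minGen K n I | g ≤ b + Pi.single t 1 ∧ g k < b k}
  have hW : W.Finite := (Set.finite_Iic (b + Pi.single t 1)).subset fun g hg => hg.2.1
  have hw₀W : w₀ ∈ W := by
    refine ⟨hw₀, fun r => (hw₀k r).trans tsub_le_self, ?_⟩
    have := hw₀k k
    simp only [Pi.sub_apply, Pi.add_apply, Pi.single_eq_same, Pi.single_eq_of_ne hkt] at this
    omega
  obtain ⟨w, ⟨hw, hwb, hwk⟩, hmax⟩ := Set.exists_max_image W toLex hW ⟨w₀, hw₀W⟩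
  refine ⟨w, hw, hwb, lt_of_not_ge fun hle => ?_⟩
  have hwb_ne : w ≠ b := ne_of_apply_ne (· k) hwk.ne
  obtain ⟨s, hws, hs⟩ : toLex w < toLex b := hle.lt_of_ne (toLex_inj.not.mpr hwb_ne)
  simp only [Pi.toLex_apply] at hws hs
  have hst : s < t := lt_of_not_ge fun hts =>
    hwb_ne (eq_of_le_of_mem_minGen hw hb (le_of_le_add_single_of_lexLT hwb hws hs hts))
  obtain ⟨h, hh, hhw, hwh⟩ :=
    IH s hst hw (fun r hr => (hab r (hr.trans hst)).trans (hws r hr).symm) (hab s hst ▸ hs)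
  have hhW : h ∈ W := by
    refine ⟨hh, fun r => ?_, ?_⟩
    · have h₁ := hhw r
      have h₂ := hwb r
      rcases eq_or_ne r s with rfl | hrs
      · simp only [Pi.add_apply, Pi.single_eq_same, Pi.single_eq_of_ne hst.ne] at h₁ h₂ ⊢
        omega
      · simp only [Pi.add_apply, Pi.single_eq_of_ne hrs, add_zero] at h₁
        exact h₁.trans h₂
    · have := hhw k
      simp only [Pi.add_apply, Pi.single_eq_of_ne (hst.trans htk).ne', add_zero] at this
      omega
  exact (hmax h hhW).not_gt hwh

end Paper

open Paper

/-- A weakly polymatroidal ideal has linear quotients with respect to the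
pure lexicographic order (induced by x_1 > x_2 > … > x_n) on its minimal generators. -/
theorem weaklyPolymatroidal_linearQuotients_purelex
    (K : Type) [Field K] (n : ℕ) (I : Ideal (MvPolynomial (Fin n) K))
    (hI : WeaklyPolymatroidal K n I)
    (t : ℕ) (u : Fin t → (Fin n → ℕ))
    (hinj : Function.Injective u)
    (hrange : Set.range u = minGen K n I)
    (hsort : ∀ i j : Fin t, i < j → toLex (u j) < toLex (u i)) :
    LinearQuotientsWith K n I t u := by
  have hu : ∀ j, u j ∈ minGen K n I := fun j => hrange ▸ Set.mem_range_self j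
  have hanti : StrictAnti (toLex ∘ u) := hsort
  refine ⟨hinj, hrange, fun i _ => ⟨_, colon_monomialIdealOf_eq_span_X ?_⟩⟩
  rintro _ ⟨j, hji, rfl⟩
  obtain ⟨s, hs, hlt⟩ : toLex (u i) < toLex (u j) := hsort j i hji
  obtain ⟨h, hh, hle, hlex⟩ :=
    hI.exists_minGen_le_add_single_lexGT (hu j) (hu i) (fun r hr => (hs r hr).symm) hlt
  obtain ⟨j', rfl⟩ : h ∈ Set.range u := hrange ▸ hh
  have hj'i : j' < i := hanti.lt_iff_gt.mp hlex
  exact ⟨s, hlt, mono_mem_of_le (Ideal.subset_span ⟨u j', ⟨j', hj'i, rfl⟩, rfl⟩) hle⟩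
end

section
/- Every polymatroidal ideal of S = K[x_1,...,x_n] is weakly polymatroidal. -/
open MvPolynomial

open Paper

private lemma Paper.eval3 {n : ℕ} (f : Fin n → ℕ) (x y s : Fin n) :
    (f + Pi.single x 1 - Pi.single y 1 : Fin n → ℕ) s
      = f s + (if s = x then 1 else 0) - (if s = y then 1 else 0) := by
  simp [Pi.single_apply]

private lemma Paper.key (K : Type) [Field K] (n : ℕ) (I : Ideal (MvPolynomial (Fin n) K))
    (d : ℕ) (hd : ∀ a ∈ minGen K n I, ∑ i, a i = d)
    (hex : ∀ a b : Fin n → ℕ, a ∈ minGen K n I → b ∈ minGen K n I →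
      ∀ i : Fin n, b i < a i → ∃ j : Fin n, a j < b j ∧
        (a + Pi.single j 1 - Pi.single i 1) ∈ minGen K n I) :
    ∀ (D : ℕ) (a b : Fin n → ℕ), a ∈ minGen K n I → b ∈ minGen K n I →
      ∀ t : Fin n, (∀ s, s < t → a s = b s) → b t < a t →
      (∑ s, (a s - b s)) ≤ D →
      ∃ j : Fin n, t < j ∧ a j < b j ∧
        (b + Pi.single t 1 - Pi.single j 1) ∈ minGen K n I := by
  intro D
  induction D with
  | zero =>
    intro a b _ _ t _ hlt hsum
    exfalso
    have h1 : a t - b t ≤ ∑ s, (a s - b s) :=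
      Finset.single_le_sum (f := fun s => a s - b s) (fun _ _ => Nat.zero_le _)
        (Finset.mem_univ t)
    omega
  | succ D IH =>
    intro a b ha hb t hpre hlt hsum
    -- find i with a i < b i
    have hex_i : ∃ i : Fin n, a i < b i := by
      by_contra hcon
      push_neg at hcon
      have h1 : ∑ i, b i < ∑ i, a i :=
        Finset.sum_lt_sum (fun i _ => hcon i) ⟨t, Finset.mem_univ t, hlt⟩
      rw [hd a ha, hd b hb] at h1
      exact lt_irrefl d h1
    obtain ⟨i, hi⟩ := hex_i
    have hti : t < i := by
      rcases lt_trichotomy i t with h | h | h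
      · have := hpre i h; omega
      · subst h; omega
      · exact h
    obtain ⟨k, hk, hb'⟩ := hex b a hb ha i hi
    have hik : i ≠ k := by rintro rfl; omega
    have htk : t ≤ k := by
      by_contra h
      push_neg at h
      have := hpre k h; omega
    by_cases hkt : k = t
    · subst hkt
      exact ⟨i, hti, hi, hb'⟩
    · have htk' : t < k := lt_of_le_of_ne htk (Ne.symm hkt)
      have hpre' : ∀ s, s < t → a s = (b + Pi.single k 1 - Pi.single i 1 : Fin n → ℕ) s := by
        intro s hs
        have h0 := hpre s hs
        simp only [Paper.eval3]
        split_ifs <;> subst_vars <;> omega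
      have hlt' : (b + Pi.single k 1 - Pi.single i 1 : Fin n → ℕ) t < a t := by
        simp only [Paper.eval3]
        split_ifs <;> subst_vars <;> omega
      have hsum' : ∑ s, (a s - (b + Pi.single k 1 - Pi.single i 1 : Fin n → ℕ) s)
          < ∑ s, (a s - b s) := by
        apply Finset.sum_lt_sum
        · intro s _
          simp only [Paper.eval3]
          split_ifs <;> subst_vars <;> omega
        · refine ⟨k, Finset.mem_univ k, ?_⟩
          simp only [Paper.eval3]
          split_ifs <;> subst_vars <;> omega
      obtain ⟨j', htj', hj'lt, hc⟩ := IH a _ ha hb' t hpre' hlt' (by omega)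
      by_cases hj'k : j' = k
      · subst hj'k
        refine ⟨i, hti, hi, ?_⟩
        have heq : (b + Pi.single t 1 - Pi.single i 1 : Fin n → ℕ)
            = b + Pi.single j' 1 - Pi.single i 1 + Pi.single t 1 - Pi.single j' 1 := by
          funext s
          simp only [Paper.eval3]
          split_ifs <;> subst_vars <;> omega
        rw [heq]
        exact hc
      · have htj'ne : t ≠ j' := by omega
        have hck : b k < (b + Pi.single k 1 - Pi.single i 1 + Pi.single t 1
            - Pi.single j' 1 : Fin n → ℕ) k := by
          simp only [Paper.eval3]
          split_ifs <;> subst_vars <;> omega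
        obtain ⟨m, hm, hcm⟩ := hex _ b hc hb k hck
        by_cases hj'i : j' = i
        · have hj'lt2 : a i + 1 < b i := by
            rw [hj'i] at hj'lt
            simp only [Paper.eval3] at hj'lt
            split_ifs at hj'lt <;> omega
          have hmi : m = i := by
            by_contra hmne
            simp only [Paper.eval3] at hm
            split_ifs at hm <;> subst_vars <;> omega
          refine ⟨i, hti, hi, ?_⟩
          have heq : (b + Pi.single t 1 - Pi.single i 1 : Fin n → ℕ)
              = b + Pi.single k 1 - Pi.single i 1 + Pi.single t 1 - Pi.single j' 1
                + Pi.single m 1 - Pi.single k 1 := by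
            funext s
            simp only [Paper.eval3]
            split_ifs <;> subst_vars <;> omega
          rw [heq]
          exact hcm
        · have hjb : a j' < b j' := by
            simp only [Paper.eval3] at hj'lt
            split_ifs at hj'lt <;> omega
          have hmor : m = i ∨ m = j' := by
            by_contra hmne
            push_neg at hmne
            obtain ⟨hm1, hm2⟩ := hmne
            simp only [Paper.eval3] at hm
            split_ifs at hm <;> subst_vars <;> omega
          rcases hmor with hmi | hmj
          · refine ⟨j', htj', hjb, ?_⟩
            have heq : (b + Pi.single t 1 - Pi.single j' 1 : Fin n → ℕ)
                = b + Pi.single k 1 - Pi.single i 1 + Pi.single t 1 - Pi.single j' 1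
                  + Pi.single m 1 - Pi.single k 1 := by
              funext s
              simp only [Paper.eval3]
              split_ifs <;> subst_vars <;> omega
            rw [heq]
            exact hcm
          · refine ⟨i, hti, hi, ?_⟩
            have heq : (b + Pi.single t 1 - Pi.single i 1 : Fin n → ℕ)
                = b + Pi.single k 1 - Pi.single i 1 + Pi.single t 1 - Pi.single j' 1
                  + Pi.single m 1 - Pi.single k 1 := by
              funext s
              simp only [Paper.eval3]
              split_ifs <;> subst_vars <;> omega
            rw [heq]
            exact hcm

/-- Every polymatroidal ideal is weakly polymatroidal. -/
theorem weaklyPolymatroidal_of_polymatroidal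
    (K : Type) [Field K] (n : ℕ) (I : Ideal (MvPolynomial (Fin n) K))
    (hI : Polymatroidal K n I) :
    WeaklyPolymatroidal K n I := by
  obtain ⟨hMon, ⟨d, hd⟩, hex⟩ := hI
  refine ⟨hMon, ?_⟩
  intro a b ha hb t hpre hlt
  obtain ⟨j, htj, hab, hmem⟩ :=
    Paper.key K n I d hd hex (∑ s, (a s - b s)) a b ha hb t hpre hlt (le_refl _)
  exact ⟨j, htj, Nat.lt_of_le_of_lt (Nat.zero_le _) hab, hmem.1⟩
end

section
/- Let I be a weakly polymatroidal ideal of S = K[x_1,...,x_n], let S' = K[x_2,...,x_n], and let I' = I ∩ S'. Then I' is a weakly polymatroidal ideal of S' (with respect to the variables x_2 > ... > x_n), and its minimal generating set is G(I) ∩ S'. -/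
open MvPolynomial

namespace Paper

variable (K : Type) [Field K]

/-! ### Auxiliary lemmas -/

lemma rename_mono (m : ℕ) (a : Fin m → ℕ) :
    (MvPolynomial.rename (Fin.succ) :
      MvPolynomial (Fin m) K →ₐ[K] MvPolynomial (Fin (m+1)) K) (mono K m a)
      = mono K (m+1) (Fin.cons 0 a) := by
  show MvPolynomial.rename Fin.succ (MvPolynomial.monomial _ (1:K)) = _
  rw [MvPolynomial.rename_monomial]
  unfold mono
  have h : Finsupp.mapDomain Fin.succ (Finsupp.equivFunOnFinite.symm a)
      = Finsupp.equivFunOnFinite.symm (Fin.cons 0 a) := by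
    ext j
    refine Fin.cases ?_ ?_ j
    · rw [Finsupp.mapDomain_notin_range]
      · simp
      · simp [Set.mem_range, eq_comm, Fin.succ_ne_zero]
    · intro i
      rw [Finsupp.mapDomain_apply (Fin.succ_injective m)]
      simp
  rw [h]

lemma mem_span_mono_iff (n : ℕ) (A : Set (Fin n → ℕ)) (p : MvPolynomial (Fin n) K) :
    p ∈ Ideal.span ((mono K n) '' A) ↔
      ∀ d ∈ p.support, ∃ a ∈ A, ∀ i, a i ≤ d i := by
  have h : (mono K n) '' A
      = (fun s => MvPolynomial.monomial s (1:K)) '' (Finsupp.equivFunOnFinite.symm '' A) := by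
    rw [Set.image_image]; rfl
  rw [h, MvPolynomial.mem_ideal_span_monomial_image]
  constructor
  · intro H d hd
    obtain ⟨si, hsi, hle⟩ := H d hd
    obtain ⟨a, ha, rfl⟩ := hsi
    exact ⟨a, ha, fun i => by simpa using hle i⟩
  · intro H d hd
    obtain ⟨a, ha, hle⟩ := H d hd
    exact ⟨_, ⟨a, ha, rfl⟩, fun i => by simpa using hle i⟩

lemma cons_sub_single (m : ℕ) (a : Fin m → ℕ) (j : Fin m) :
    (Fin.cons 0 a : Fin (m+1) → ℕ) - Pi.single (Fin.succ j) 1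
      = Fin.cons (0:ℕ) (a - Pi.single j 1) := by
  funext i
  refine Fin.cases ?_ ?_ i
  · simp [Pi.single_apply, (Fin.succ_ne_zero j).symm]
  · intro i
    simp [Pi.single_apply, Fin.succ_inj]

lemma cons_add_single (m : ℕ) (a : Fin m → ℕ) (j : Fin m) :
    (Fin.cons 0 a : Fin (m+1) → ℕ) + Pi.single (Fin.succ j) 1
      = Fin.cons (0:ℕ) (a + Pi.single j 1) := by
  funext i
  refine Fin.cases ?_ ?_ i
  · simp [Pi.single_apply, (Fin.succ_ne_zero j).symm]
  · intro i
    simp [Pi.single_apply, Fin.succ_inj]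

end Paper

open Paper
/-- If `I` is weakly polymatroidal, then `I' = I ∩ S'` (for
`S' = K[x_2,…,x_n]`) is weakly polymatroidal, with minimal generating set `G(I) ∩ S'`. -/
theorem weaklyPolymatroidal_restrict
    (K : Type) [Field K] (m : ℕ) (I : Ideal (MvPolynomial (Fin (m + 1)) K))
    (hI : WeaklyPolymatroidal K (m + 1) I) :
    WeaklyPolymatroidal K m
        (Ideal.comap (MvPolynomial.rename (Fin.succ) :
          MvPolynomial (Fin m) K →ₐ[K] MvPolynomial (Fin (m + 1)) K) I) ∧
      minGen K m (Ideal.comap (MvPolynomial.rename (Fin.succ) :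
          MvPolynomial (Fin m) K →ₐ[K] MvPolynomial (Fin (m + 1)) K) I) =
        {a | ∃ b ∈ minGen K (m + 1) I, b 0 = 0 ∧ a = b ∘ Fin.succ} := by
  set f := (MvPolynomial.rename (Fin.succ) :
      MvPolynomial (Fin m) K →ₐ[K] MvPolynomial (Fin (m + 1)) K) with hf
  set I' := Ideal.comap f I with hI'def
  have hmem : ∀ a : Fin m → ℕ, mono K m a ∈ I' ↔ mono K (m+1) (Fin.cons 0 a) ∈ I := by
    intro a
    rw [hI'def, Ideal.mem_comap, hf, rename_mono]
  have hminGen : ∀ a : Fin m → ℕ,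
      a ∈ minGen K m I' ↔ (Fin.cons (0:ℕ) a : Fin (m+1) → ℕ) ∈ minGen K (m+1) I := by
    intro a
    constructor
    · rintro ⟨h1, h2⟩
      refine ⟨(hmem a).1 h1, fun i => ?_⟩
      rcases Fin.eq_zero_or_eq_succ i with rfl | ⟨j, rfl⟩
      · intro hi; simp at hi
      · intro hj
        rw [cons_sub_single]
        exact fun h => h2 j (by simpa using hj) ((hmem _).2 h)
    · rintro ⟨h1, h2⟩
      refine ⟨(hmem a).2 h1, fun j hj hmemj => ?_⟩
      have := h2 (Fin.succ j) (by simpa using hj)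
      rw [cons_sub_single] at this
      exact this ((hmem _).1 hmemj)
  have hset : minGen K m I'
      = {a | ∃ b ∈ minGen K (m + 1) I, b 0 = 0 ∧ a = b ∘ Fin.succ} := by
    ext a
    rw [Set.mem_setOf_eq, hminGen]
    constructor
    · intro h
      exact ⟨Fin.cons 0 a, h, by simp, by funext i; simp⟩
    · rintro ⟨b, hb, hb0, rfl⟩
      have hb' : (Fin.cons (0:ℕ) (b ∘ Fin.succ) : Fin (m+1) → ℕ) = b := by
        funext i
        rcases Fin.eq_zero_or_eq_succ i with rfl | ⟨j, rfl⟩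
        · simpa using hb0.symm
        · simp
      rw [hb']
      exact hb
  have heqI : I = Ideal.span ((mono K (m+1)) '' {a | mono K (m+1) a ∈ I}) := hI.1
  have hmonI' : I' = Ideal.span ((mono K m) '' {a | mono K m a ∈ I'}) := by
    apply le_antisymm
    · intro p hp
      rw [mem_span_mono_iff]
      intro d hd
      have hpI : f p ∈ I := hp
      rw [heqI, mem_span_mono_iff] at hpI
      have hsupp : Finsupp.mapDomain Fin.succ d ∈ (f p).support := by
        rw [hf]
        show _ ∈ (MvPolynomial.rename Fin.succ p).support
        rw [MvPolynomial.support_rename_of_injective (Fin.succ_injective m)]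
        exact Finset.mem_image_of_mem _ hd
      obtain ⟨c, hcI, hcle⟩ := hpI _ hsupp
      have hc0 : c 0 = 0 := by
        have := hcle 0
        rw [Finsupp.mapDomain_notin_range] at this
        · omega
        · simp [Set.mem_range, eq_comm, Fin.succ_ne_zero]
      have hcons : (Fin.cons (0:ℕ) (c ∘ Fin.succ) : Fin (m+1) → ℕ) = c := by
        funext i
        rcases Fin.eq_zero_or_eq_succ i with rfl | ⟨j, rfl⟩
        · simpa using hc0.symm
        · simp
      refine ⟨c ∘ Fin.succ, ?_, fun i => ?_⟩
      · show mono K m (c ∘ Fin.succ) ∈ I'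
        rw [hmem, hcons]
        exact hcI
      · have := hcle (Fin.succ i)
        rwa [Finsupp.mapDomain_apply (Fin.succ_injective m)] at this
    · rw [Ideal.span_le]
      rintro q ⟨a, ha, rfl⟩
      exact ha
  refine ⟨⟨hmonI', ?_⟩, hset⟩
  intro a b ha hb t hst hbt
  have ha' := (hminGen a).1 ha
  have hb' := (hminGen b).1 hb
  have hpre : ∀ s : Fin (m+1), s < Fin.succ t →
      (Fin.cons (0:ℕ) a : Fin (m+1) → ℕ) s = (Fin.cons (0:ℕ) b : Fin (m+1) → ℕ) s := by
    intro s hs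
    rcases Fin.eq_zero_or_eq_succ s with rfl | ⟨s', rfl⟩
    · simp
    · simp only [Fin.cons_succ]
      exact hst s' (by simpa [Fin.succ_lt_succ_iff] using hs)
  obtain ⟨j, hj, hjpos, hjmem⟩ :=
    hI.2 _ _ ha' hb' (Fin.succ t) hpre (by simpa using hbt)
  have hj0 : j ≠ 0 := by rintro rfl; exact Fin.not_lt_zero _ hj
  obtain ⟨j', rfl⟩ : ∃ j', j = Fin.succ j' := ⟨j.pred hj0, (Fin.succ_pred j hj0).symm⟩
  refine ⟨j', by simpa [Fin.succ_lt_succ_iff] using hj, by simpa using hjpos, ?_⟩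
  rw [cons_add_single, cons_sub_single] at hjmem
  exact (hmem _).2 hjmem
end

section
/- Let I be a monomial ideal of S = K[x_1,...,x_n] none of whose minimal generators is divisible by x_1, and let S' = K[x_2,...,x_n], I' = I ∩ S'. Then sdepth_S(S/I) = sdepth_{S'}(S'/I') + 1. -/
open MvPolynomial

open Paper

/-!
A Stanley decomposition of `S/I` is a partition of `ℕ^n` into the exponent set of `I` and finitely
many cones `a + ℕ^Z`. Since `x_1` (coordinate `0` here) divides no minimal generator, the exponent
set of `I` is the cylinder `ℕ × E'` over the exponent set `E'` of `I'`. Adding the direction `x_1`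
to every cone of a decomposition of `S'/I'` gives one of `S/I`; conversely, slicing a decomposition
of `S/I` at `x_1`-degree `0` keeps the cones whose apex has `x_1`-degree `0` and costs each of them
at most one direction. By Dickson's lemma some decomposition of `S'/I'` exists (cap all exponents
at a bound for the minimal generators), so neither Stanley depth is a supremum over the empty set.
-/

namespace Paper

open Function

section Cones

variable {n : ℕ} {ι κ : Type*}

def cone (a : Fin n → ℕ) (Z : Finset (Fin n)) : Set (Fin n → ℕ) :=
  (a + ·) '' {e | ∀ j ∉ Z, e j = 0}

theorem mem_cone_iff {a g : Fin n → ℕ} {Z : Finset (Fin n)} :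
    g ∈ cone a Z ↔ a ≤ g ∧ ∀ j ∉ Z, g j = a j := by
  constructor
  · rintro ⟨e, he, rfl⟩
    exact ⟨le_self_add, fun j hj => by simp [he j hj]⟩
  · rintro ⟨hag, hZ⟩
    exact ⟨g - a, fun j hj => by simp [hZ j hj], add_tsub_cancel_of_le hag⟩

/-- `S` (indexed by `none`) and the cones `cone (a i) (Z i)` (indexed by `some i`) partition
`ℕ^n`. -/
def IsConePartition (S : Set (Fin n → ℕ)) (a : ι → Fin n → ℕ) (Z : ι → Finset (Fin n)) :
    Prop :=
  ∀ g, ∃! o : Option ι, g ∈ o.elim S fun i => cone (a i) (Z i)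

theorem forall_existsUnique_mem_iff {α : Type*} {F : ι → Set α} :
    (∀ x, ∃! i, x ∈ F i) ↔ Pairwise (Disjoint on F) ∧ ⋃ i, F i = Set.univ := by
  refine ⟨fun h => ⟨fun i j hij => Set.disjoint_left.2 fun x hi hj => hij ((h x).unique hi hj),
    Set.iUnion_eq_univ_iff.2 fun x => (h x).exists⟩, fun ⟨hdisj, hcover⟩ x => ?_⟩
  obtain ⟨i, hi⟩ := Set.iUnion_eq_univ_iff.1 hcover x
  exact ⟨i, hi, fun j hj => by_contra fun hji => Set.disjoint_left.1 (hdisj hji) hj hi⟩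

theorem existsUnique_comp_iff {α β : Type*} {f : α → β} (hf : Injective f)
    {p : β → Prop} (hp : ∀ b, p b → b ∈ Set.range f) : (∃! a, p (f a)) ↔ ∃! b, p b := by
  constructor
  · rintro ⟨a, ha, hu⟩
    refine ⟨f a, ha, fun b hb => ?_⟩
    obtain ⟨a', rfl⟩ := hp b hb
    rw [hu a' hb]
  · rintro ⟨b, hb, hu⟩
    obtain ⟨a, rfl⟩ := hp b hb
    exact ⟨a, hb, fun a' ha' => hf (hu _ ha')⟩

theorem IsConePartition.comp_equiv {S : Set (Fin n → ℕ)} {a : ι → Fin n → ℕ}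
    {Z : ι → Finset (Fin n)} (h : IsConePartition S a Z) (e : κ ≃ ι) :
    IsConePartition S (a ∘ e) (Z ∘ e) := fun g =>
  (e.optionCongr.existsUnique_congr fun o => by cases o <;> rfl).2 (h g)

def coneDepths (S : Set (Fin n → ℕ)) : Set ℕ :=
  {d | ∃ (t : ℕ) (a : Fin t → Fin n → ℕ) (Z : Fin t → Finset (Fin n)),
    IsConePartition S a Z ∧ ∀ i, d ≤ (Z i).card}

theorem IsConePartition.mem_coneDepths [Finite ι] {S : Set (Fin n → ℕ)} {a : ι → Fin n → ℕ}
    {Z : ι → Finset (Fin n)} (h : IsConePartition S a Z) {d : ℕ} (hd : ∀ i, d ≤ (Z i).card) :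
    d ∈ coneDepths S :=
  ⟨_, _, _, h.comp_equiv (Finite.equivFin ι).symm, fun _ => hd _⟩

theorem cons_mem_cone_iff {a : Fin (n + 1) → ℕ} {Z : Finset (Fin (n + 1))} {x : ℕ}
    {g : Fin n → ℕ} :
    Fin.cons x g ∈ cone a Z ↔ a 0 ≤ x ∧ (0 ∉ Z → x = a 0) ∧
      g ∈ cone (Fin.tail a) (Z.preimage Fin.succ (Fin.succ_injective n).injOn) := by
  simp only [mem_cone_iff, Fin.forall_fin_succ, Fin.cons_zero, Fin.cons_succ,
    Finset.mem_preimage, Fin.tail, Pi.le_def]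
  tauto

theorem IsConePartition.lift {S : Set (Fin (n + 1) → ℕ)} {S' : Set (Fin n → ℕ)}
    (hS : ∀ g, g ∈ S ↔ Fin.tail g ∈ S') {a : ι → Fin n → ℕ} {Z : ι → Finset (Fin n)}
    (h : IsConePartition S' a Z) :
    IsConePartition S (fun i => Fin.cons 0 (a i))
      (fun i => insert 0 ((Z i).map (Fin.succEmb n))) := by
  intro g
  refine (existsUnique_congr fun o => ?_).2 (h (Fin.tail g))
  rcases o with _ | i
  · exact hS g
  · have hZ : (insert 0 ((Z i).map (Fin.succEmb n))).preimage Fin.succ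
        (Fin.succ_injective n).injOn = Z i := by
      ext j
      simp [Fin.succ_ne_zero]
    show g ∈ cone _ _ ↔ Fin.tail g ∈ cone _ _
    rw [← Fin.cons_self_tail g, cons_mem_cone_iff, hZ]
    simp

theorem card_le_card_preimage_succ_add_one (Z : Finset (Fin (n + 1))) :
    Z.card ≤ (Z.preimage Fin.succ (Fin.succ_injective n).injOn).card + 1 := by
  calc Z.card ≤ (insert 0 ((Z.preimage Fin.succ (Fin.succ_injective n).injOn).map
        (Fin.succEmb n))).card := by
        refine Finset.card_le_card fun j hj => ?_
        cases j using Fin.cases <;> simp [hj]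
    _ ≤ _ := by simp

theorem IsConePartition.restrict {S : Set (Fin (n + 1) → ℕ)} {S' : Set (Fin n → ℕ)}
    (hS : ∀ g, g ∈ S ↔ Fin.tail g ∈ S') {a : ι → Fin (n + 1) → ℕ} {Z : ι → Finset (Fin (n + 1))}
    (h : IsConePartition S a Z) :
    IsConePartition S' (fun i : {i // a i 0 = 0} => Fin.tail (a i))
      (fun i => (Z i).preimage Fin.succ (Fin.succ_injective n).injOn) := by
  intro g
  have hmem : ∀ o : Option {i // a i 0 = 0},
      g ∈ o.elim S' (fun i => cone (Fin.tail (a i))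
          ((Z i).preimage Fin.succ (Fin.succ_injective n).injOn)) ↔
        Fin.cons 0 g ∈ (o.map Subtype.val).elim S fun i => cone (a i) (Z i) := by
    rintro (_ | ⟨i, hi⟩)
    · simp [hS]
    · simp [cons_mem_cone_iff, hi]
  rw [existsUnique_congr hmem]
  refine (existsUnique_comp_iff (p := fun o => Fin.cons 0 g ∈ o.elim S fun i => cone (a i) (Z i))
    (Option.map_injective Subtype.val_injective) ?_).2 (h _)
  rintro (_ | i) hi
  · exact ⟨none, rfl⟩
  · exact ⟨some ⟨i, Nat.le_zero.1 (cons_mem_cone_iff.1 hi).1⟩, rfl⟩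

theorem succ_mem_coneDepths {S : Set (Fin (n + 1) → ℕ)} {S' : Set (Fin n → ℕ)}
    (hS : ∀ g, g ∈ S ↔ Fin.tail g ∈ S') {d : ℕ} (hd : d ∈ coneDepths S') :
    d + 1 ∈ coneDepths S := by
  obtain ⟨t, a, Z, h, hZ⟩ := hd
  refine (h.lift hS).mem_coneDepths fun i => ?_
  rw [Finset.card_insert_of_notMem (by simp [Fin.succ_ne_zero]), Finset.card_map]
  exact Nat.succ_le_succ (hZ i)

theorem pred_mem_coneDepths {S : Set (Fin (n + 1) → ℕ)} {S' : Set (Fin n → ℕ)}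
    (hS : ∀ g, g ∈ S ↔ Fin.tail g ∈ S') {d : ℕ} (hd : d ∈ coneDepths S) :
    d - 1 ∈ coneDepths S' := by
  obtain ⟨t, a, Z, h, hZ⟩ := hd
  refine (h.restrict hS).mem_coneDepths fun i => ?_
  have := card_le_card_preimage_succ_add_one (Z i)
  have := hZ i
  omega

/-- Dickson's lemma: an upper set is determined by its part below some bound `B`. -/
theorem IsUpperSet.exists_inf_mem_iff {S : Set (Fin n → ℕ)} (hS : IsUpperSet S) :
    ∃ B, ∀ g, g ⊓ B ∈ S ↔ g ∈ S := by
  have hfin : {b | Minimal (· ∈ S) b}.Finite :=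
    (setOfPred_minimal_antichain _).finite_of_partiallyWellOrderedOn
      ((Set.isPWO_of_wellQuasiOrderedLE S).mono (setOfPred_minimal_subset _))
  obtain ⟨B, hB⟩ := hfin.bddAbove
  refine ⟨B, fun g => ⟨fun h => hS inf_le_left h, fun hg => ?_⟩⟩
  obtain ⟨b, hbg, hb⟩ := exists_minimal_le_of_wellFoundedLT (· ∈ S) g hg
  exact hS (le_inf hbg (hB hb)) hb.prop

theorem mem_cone_iff_inf_eq {b B g : Fin n → ℕ} (hb : b ≤ B) :
    g ∈ cone b {j | b j = B j} ↔ g ⊓ B = b := by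
  simp only [mem_cone_iff, Pi.le_def, funext_iff, Pi.inf_apply, Finset.mem_filter,
    Finset.mem_univ, true_and, ← forall_and]
  exact forall_congr' fun j => by have : b j ≤ B j := hb j; omega

theorem isConePartition_of_inf_mem_iff {S : Set (Fin n → ℕ)} {B : Fin n → ℕ}
    (hB : ∀ g, g ⊓ B ∈ S ↔ g ∈ S) :
    IsConePartition S (fun b : {b // b ≤ B ∧ b ∉ S} => b.1) (fun b => {j | b.1 j = B j}) := by
  intro g
  by_cases hg : g ∈ S
  · refine ⟨none, hg, ?_⟩
    rintro (_ | ⟨b, hbB, hbS⟩) hgb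
    · rfl
    · rw [Option.elim_some, mem_cone_iff_inf_eq hbB] at hgb
      exact absurd (hgb ▸ (hB g).2 hg) hbS
  · refine ⟨some ⟨g ⊓ B, inf_le_right, fun h => hg ((hB g).1 h)⟩,
      (mem_cone_iff_inf_eq inf_le_right).2 rfl, ?_⟩
    rintro (_ | ⟨b, hbB, hbS⟩) hgb
    · exact absurd hgb hg
    · rw [Option.elim_some, mem_cone_iff_inf_eq hbB] at hgb
      exact congrArg some (Subtype.ext hgb.symm)

theorem IsUpperSet.zero_mem_coneDepths {S : Set (Fin n → ℕ)} (hS : IsUpperSet S) :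
    0 ∈ coneDepths S := by
  obtain ⟨B, hB⟩ := hS.exists_inf_mem_iff
  have : Finite {b // b ≤ B ∧ b ∉ S} :=
    ((Set.finite_Icc 0 B).subset fun b hb => ⟨zero_le, hb.1⟩).to_subtype
  exact (isConePartition_of_inf_mem_iff hB).mem_coneDepths fun _ => zero_le

end Cones

theorem sSup_image_natCast_eq_add_one {A A' : Set ℕ} (hA' : A'.Nonempty)
    (hsucc : ∀ d ∈ A', d + 1 ∈ A) (hpred : ∀ d ∈ A, d - 1 ∈ A') :
    sSup ((↑) '' A : Set ℕ∞) = sSup ((↑) '' A') + 1 := by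
  rw [ENat.sSup_add (hA'.image _), iSup_image]
  apply le_antisymm
  · refine sSup_le ?_
    rintro _ ⟨d, hd, rfl⟩
    refine le_iSup₂_of_le (d - 1) (hpred d hd) ?_
    exact_mod_cast le_tsub_add
  · refine iSup₂_le fun d hd => ?_
    exact_mod_cast le_sSup (Set.mem_image_of_mem _ (hsucc d hd))

section Monomials

variable {σ R : Type*} [CommSemiring R] {K : Type} [Field K] {n : ℕ}

theorem restrictSupport_iUnion {ι : Sort*} (s : ι → Set (σ →₀ ℕ)) :
    restrictSupport R (⋃ i, s i) = ⨆ i, restrictSupport R (s i) := by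
  simp_rw [restrictSupport_eq_span, Set.image_iUnion, Submodule.span_iUnion]

theorem disjoint_restrictSupport_iff [Nontrivial R] {s t : Set (σ →₀ ℕ)} :
    Disjoint (restrictSupport R s) (restrictSupport R t) ↔ Disjoint s t := by
  refine ⟨fun h => Set.disjoint_left.2 fun d hs ht => ?_, fun h => ?_⟩
  · have := Submodule.disjoint_def.1 h (monomial d 1) ((monomial_mem_restrictSupport R).2 (.inl hs))
      ((monomial_mem_restrictSupport R).2 (.inl ht))
    exact one_ne_zero (monomial_eq_zero.1 this)
  · refine Submodule.disjoint_def.2 fun f hs ht => support_eq_empty.1 ?_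
    exact Finset.coe_eq_empty.1 <| Set.subset_empty_iff.1 <|
      (Set.subset_inter hs ht).trans (Set.disjoint_iff.1 h)

theorem iSupIndep_restrictSupport_iff [Nontrivial R] {ι : Type*} {s : ι → Set (σ →₀ ℕ)} :
    iSupIndep (fun i => restrictSupport R (s i)) ↔ Pairwise (Disjoint on s) := by
  rw [iSupIndep_def]
  simp_rw [← restrictSupport_iUnion, disjoint_restrictSupport_iff,
    Set.disjoint_iUnion_right]
  exact ⟨fun h i j hij => h i j hij.symm, fun h i j hji => h hji.symm⟩

theorem iSup_restrictSupport_eq_top_iff [Nontrivial R] {ι : Type*} {s : ι → Set (σ →₀ ℕ)} :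
    ⨆ i, restrictSupport R (s i) = ⊤ ↔ ⋃ i, s i = Set.univ := by
  rw [← restrictSupport_iUnion]
  refine ⟨fun h => Set.eq_univ_of_forall fun d => ?_, fun h => by rw [h, restrictSupport_univ]⟩
  have := h ▸ Submodule.mem_top (x := monomial d (1 : R))
  simpa using (monomial_mem_restrictSupport R).1 this

theorem stanleySpace_eq_restrictSupport (a : Fin n → ℕ) (Z : Finset (Fin n)) :
    stanleySpace K n a Z = restrictSupport K (Finsupp.equivFunOnFinite ⁻¹' cone a Z) := by
  rw [stanleySpace, restrictSupport_eq_span, ← Equiv.image_symm_eq_preimage, cone,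
    Set.image_image, Set.image_image]
  rfl

theorem isStanleyDecOfQuot_iff {I : Ideal (MvPolynomial (Fin n) K)} {S : Set (Fin n → ℕ)}
    (hI : I.restrictScalars K = restrictSupport K (Finsupp.equivFunOnFinite ⁻¹' S)) {t : ℕ}
    {a : Fin t → Fin n → ℕ} {Z : Fin t → Finset (Fin n)} :
    IsStanleyDecOfQuot K n I t a Z ↔ IsConePartition S a Z := by
  have hF : (fun o : Option (Fin t) => o.elim (I.restrictScalars K)
      fun i => stanleySpace K n (a i) (Z i)) = fun o => restrictSupport K
        (Finsupp.equivFunOnFinite ⁻¹' o.elim S fun i => cone (a i) (Z i)) := by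
    funext o
    cases o
    exacts [hI, stanleySpace_eq_restrictSupport _ _]
  rw [IsStanleyDecOfQuot, hF, iSupIndep_restrictSupport_iff, iSup_restrictSupport_eq_top_iff,
    IsConePartition, forall_existsUnique_mem_iff, ← Set.preimage_iUnion, ← Set.preimage_univ,
    (Set.preimage_injective.2 Finsupp.equivFunOnFinite.surjective).eq_iff]
  simp_rw [Pairwise, onFun, Set.disjoint_preimage_iff Finsupp.equivFunOnFinite.surjective]

theorem sdepthQuot_eq_sSup_coneDepths {I : Ideal (MvPolynomial (Fin n) K)} {S : Set (Fin n → ℕ)}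
    (hI : I.restrictScalars K = restrictSupport K (Finsupp.equivFunOnFinite ⁻¹' S)) :
    sdepthQuot K n I = sSup ((↑) '' coneDepths S) := by
  simp only [sdepthQuot, coneDepths, isStanleyDecOfQuot_iff hI]

theorem isUpperSet_setOf_mono_mem (I : Ideal (MvPolynomial (Fin n) K)) :
    IsUpperSet {g | mono K n g ∈ I} := by
  intro a b hab ha
  have hadd : Finsupp.equivFunOnFinite.symm (b - a) + Finsupp.equivFunOnFinite.symm a =
      Finsupp.equivFunOnFinite.symm b := by
    ext j
    simp [tsub_add_cancel_of_le (hab j)]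
  have : mono K n b = mono K n (b - a) * mono K n a := by
    rw [mono, mono, mono, monomial_mul, mul_one, hadd]
  show mono K n b ∈ I
  rw [this]
  exact I.mul_mem_left _ ha

theorem mem_minGen_of_minimal {I : Ideal (MvPolynomial (Fin n) K)} {a : Fin n → ℕ}
    (ha : Minimal (· ∈ {g | mono K n g ∈ I}) a) : a ∈ minGen K n I := by
  refine ⟨ha.prop, fun i hi => ha.not_prop_of_lt ?_⟩
  refine Pi.lt_def.2 ⟨fun j => tsub_le_self, i, ?_⟩
  simp only [Pi.sub_apply, Pi.single_eq_same]
  omega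

theorem mono_mem_iff_cons_zero_tail_mem {m : ℕ} {I : Ideal (MvPolynomial (Fin (m + 1)) K)}
    (hx : ∀ a ∈ minGen K (m + 1) I, a 0 = 0) (g : Fin (m + 1) → ℕ) :
    mono K (m + 1) g ∈ I ↔ mono K (m + 1) (Fin.cons 0 (Fin.tail g)) ∈ I := by
  refine ⟨fun hg => ?_, isUpperSet_setOf_mono_mem I (Fin.cons_le.2 ⟨zero_le, le_rfl⟩)⟩
  obtain ⟨b, hbg, hb⟩ := exists_minimal_le_of_wellFoundedLT (· ∈ {g | mono K (m + 1) g ∈ I}) g hg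
  refine isUpperSet_setOf_mono_mem I (Fin.le_cons.2 ⟨?_, fun j => hbg j.succ⟩) hb.prop
  exact (hx b (mem_minGen_of_minimal hb)).le

theorem mem_iff_forall_mono_mem {I : Ideal (MvPolynomial (Fin n) K)} (hI : IsMonomialIdeal K n I)
    {f : MvPolynomial (Fin n) K} : f ∈ I ↔ ∀ d ∈ f.support, mono K n d ∈ I := by
  classical
  have hspan : ∀ f, f ∈ I ↔ ∀ d ∈ f.support, ∃ b ∈ Finsupp.equivFunOnFinite.symm ''
      {a | mono K n a ∈ I}, b ≤ d := by
    intro f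
    have himage : mono K n '' {a | mono K n a ∈ I} = (fun d => monomial d (1 : K)) ''
        (Finsupp.equivFunOnFinite.symm '' {a | mono K n a ∈ I}) := by
      rw [Set.image_image]
      rfl
    conv_lhs => rw [hI]
    rw [himage]
    exact mem_ideal_span_monomial_image
  refine (hspan f).trans (forall₂_congr fun d _ => ?_)
  rw [hspan, mono, Finsupp.equivFunOnFinite_symm_coe, support_monomial, if_neg one_ne_zero]
  simp

theorem restrictScalars_eq_restrictSupport {I : Ideal (MvPolynomial (Fin n) K)}
    (hI : IsMonomialIdeal K n I) :
    I.restrictScalars K =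
      restrictSupport K (Finsupp.equivFunOnFinite ⁻¹' {g | mono K n g ∈ I}) := by
  ext f
  exact mem_iff_forall_mono_mem hI

theorem coe_mapDomain_succ {m : ℕ} (d : Fin m →₀ ℕ) :
    ⇑(d.mapDomain Fin.succ) = Fin.cons 0 ⇑d := by
  ext i
  cases i using Fin.cases with
  | zero => exact Finsupp.mapDomain_of_notMem_range _ _ fun ⟨j, hj⟩ => Fin.succ_ne_zero j hj
  | succ j => exact Finsupp.mapDomain_apply (Fin.succ_injective m) d j

theorem restrictScalars_comap_rename_succ {m : ℕ} {I : Ideal (MvPolynomial (Fin (m + 1)) K)}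
    (hI : IsMonomialIdeal K (m + 1) I) :
    (I.comap (rename Fin.succ :
        MvPolynomial (Fin m) K →ₐ[K] MvPolynomial (Fin (m + 1)) K)).restrictScalars K =
      restrictSupport K
        (Finsupp.equivFunOnFinite ⁻¹' {g' | mono K (m + 1) (Fin.cons 0 g') ∈ I}) := by
  classical
  ext f
  rw [Submodule.restrictScalars_mem, Ideal.mem_comap, mem_iff_forall_mono_mem hI,
    support_rename_of_injective (Fin.succ_injective m), Finset.forall_mem_image]
  simp_rw [coe_mapDomain_succ]
  rfl

end Monomials

end Paper

theorem sdepth_eq_of_not_divisible_general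
    (K : Type) [Field K] (m : ℕ)
    (I : Ideal (MvPolynomial (Fin (m + 1)) K))
    (hI : IsMonomialIdeal K (m + 1) I)
    (hx : ∀ a ∈ minGen K (m + 1) I, a 0 = 0) :
    sdepthQuot K (m + 1) I =
      sdepthQuot K m (Ideal.comap (MvPolynomial.rename (Fin.succ) :
        MvPolynomial (Fin m) K →ₐ[K] MvPolynomial (Fin (m + 1)) K) I) + 1 := by
  rw [sdepthQuot_eq_sSup_coneDepths (restrictScalars_eq_restrictSupport hI),
    sdepthQuot_eq_sSup_coneDepths (restrictScalars_comap_rename_succ hI)]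
  have hS := mono_mem_iff_cons_zero_tail_mem hx
  have hS' : IsUpperSet {g' : Fin m → ℕ | mono K (m + 1) (Fin.cons 0 g') ∈ I} :=
    (isUpperSet_setOf_mono_mem I).preimage fun _ _ h => Fin.cons_le_cons.2 ⟨le_rfl, h⟩
  exact sSup_image_natCast_eq_add_one ⟨0, hS'.zero_mem_coneDepths⟩
    (fun _ => succ_mem_coneDepths hS) (fun _ => pred_mem_coneDepths hS)

/-- If no minimal generator of the monomial ideal `I` is divisible by `x_1`,
then `sdepth(S/I) = sdepth(S'/I') + 1` where `S' = K[x_2,…,x_n]` and `I' = I ∩ S'`. -/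
theorem sdepth_eq_of_not_divisible
    (K : Type) [Field K] (m : ℕ) (hm : 1 ≤ m)
    (I : Ideal (MvPolynomial (Fin (m + 1)) K))
    (hI : IsMonomialIdeal K (m + 1) I)
    (hx : ∀ a ∈ minGen K (m + 1) I, a 0 = 0) :
    sdepthQuot K (m + 1) I =
      sdepthQuot K m (Ideal.comap (MvPolynomial.rename (Fin.succ) :
        MvPolynomial (Fin m) K →ₐ[K] MvPolynomial (Fin (m + 1)) K) I) + 1 :=
  sdepth_eq_of_not_divisible_general K m I hI hx
end
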